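/- For every graph G, Boppana's lower bound coincides with both Feige–Kilian SDP bounds: h(G) = h_p(G) = h_d(G), where h_p(G) = inf { ∑_{{i,j}∈E, i<j} (1 − Y_{ij})/2 : Y ∈ ℝ^{n×n} symmetric positive semidefinite, Y_{ii} = 1 for all i, ∑_{i,j} Y_{ij} = 0 } and h_d(G) = sup { |E|/2 + (1/4)∑_i x_i : x₀ ∈ ℝ, x ∈ ℝ^n, and −A − x₀·J − diag(x) is positive semidefinite }. -/

import Mathlib

/-!
Weak duality gives `hD ≤ hB ≤ hP`. If `-A - x₀ J - diag x ⪰ 0`, its quadratic form on `𝟙ᗮ`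
shows `λ_S(A + diag x) ≤ 0`. If `Y` is primal feasible, write `Y = ∑ₖ vₖ vₖᵀ`; then `𝟙ᵀ Y 𝟙 = 0`
forces every `vₖ ⟂ 𝟙`, so `⟨A + D, Y⟩ = ∑ₖ vₖᵀ (A + D) vₖ ≤ λ_S · tr Y = n λ_S`.

The remaining inequality `hP ≤ hD` is strong duality, proved by separation. For `γ > hD`, the
affine family of dual slack matrices of value `γ` misses the open convex cone of matrices with
uniformly positive quadratic form. A separating functional, symmetrised to `⟨Y, ·⟩`, is
nonnegative on that cone, so `Y ⪰ 0`; being bounded on the affine family forces `𝟙ᵀ Y 𝟙 = 0`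
and a constant diagonal `y`, and `y > 0` since `Y ≠ 0`. Then `Y / y` is primal feasible with
value at most `γ`.
-/

open Matrix BigOperators Finset

noncomputable section

/-- Adjacency matrix of a graph on `Fin n`, with real entries. -/
def adjA {n : ℕ} (G : SimpleGraph (Fin n)) [DecidableRel G.Adj] :
    Matrix (Fin n) (Fin n) ℝ :=
  Matrix.of fun i j => if G.Adj i j then (1 : ℝ) else 0

/-- A bisection vector: entries in `{+1, -1}` summing to zero. -/
def IsBisection {n : ℕ} (x : Fin n → ℝ) : Prop :=
  (∀ i, x i = 1 ∨ x i = -1) ∧ ∑ i, x i = 0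

/-- Cut width of a `±1` vector: `∑_{{i,j}∈E} (1 - x_i x_j)/2`, written as a sum
over ordered pairs (each edge counted twice, hence the `/4`). -/
def cw {n : ℕ} (G : SimpleGraph (Fin n)) [DecidableRel G.Adj] (x : Fin n → ℝ) : ℝ :=
  (∑ i, ∑ j, adjA G i j * (1 - x i * x j)) / 4

/-- Bisection width: minimum cut width over all bisection vectors. -/
def bw {n : ℕ} (G : SimpleGraph (Fin n)) [DecidableRel G.Adj] : ℝ :=
  sInf {c | ∃ x : Fin n → ℝ, IsBisection x ∧ cw G x = c}

/-- `λ_S(B)`: supremum of the Rayleigh quotient of `B` over nonzero vectors of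
coordinate sum zero. -/
def lamS {n : ℕ} (B : Matrix (Fin n) (Fin n) ℝ) : ℝ :=
  sSup {r | ∃ x : Fin n → ℝ, x ≠ 0 ∧ ∑ i, x i = 0 ∧
    r = (x ⬝ᵥ B.mulVec x) / (∑ i, (x i) ^ 2)}

/-- Sum of all entries of a matrix. -/
def msum {n : ℕ} (M : Matrix (Fin n) (Fin n) ℝ) : ℝ := ∑ i, ∑ j, M i j

/-- Boppana's function `g(G,d)`. -/
def gB {n : ℕ} (G : SimpleGraph (Fin n)) [DecidableRel G.Adj] (d : Fin n → ℝ) : ℝ :=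
  (msum (adjA G + Matrix.diagonal d) - n * lamS (adjA G + Matrix.diagonal d)) / 4

/-- Boppana's lower bound `h(G) = sup_d g(G,d)`. -/
def hB {n : ℕ} (G : SimpleGraph (Fin n)) [DecidableRel G.Adj] : ℝ :=
  sSup {r | ∃ d : Fin n → ℝ, r = gB G d}

/-- Number of edges of `G`. -/
def edgeCount {n : ℕ} (G : SimpleGraph (Fin n)) [DecidableRel G.Adj] : ℕ :=
  G.edgeFinset.card

/-- The all-ones matrix `J`. -/
def Jmat (n : ℕ) : Matrix (Fin n) (Fin n) ℝ := Matrix.of fun _ _ => (1 : ℝ)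

/-- The projection matrix `P = I - J/n`. -/
def Pmat (n : ℕ) : Matrix (Fin n) (Fin n) ℝ := 1 - (n : ℝ)⁻¹ • Jmat n

/-- The Feige–Kilian primal SDP value `h_p(G)`. -/
def hP {n : ℕ} (G : SimpleGraph (Fin n)) [DecidableRel G.Adj] : ℝ :=
  sInf {r | ∃ Y : Matrix (Fin n) (Fin n) ℝ, Y.PosSemidef ∧
    (∀ i, Y i i = 1) ∧ (∑ i, ∑ j, Y i j) = 0 ∧
    r = ∑ i, ∑ j, if i < j then adjA G i j * (1 - Y i j) / 2 else 0}

/-- The Feige–Kilian dual SDP value `h_d(G)`. -/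
def hD {n : ℕ} (G : SimpleGraph (Fin n)) [DecidableRel G.Adj] : ℝ :=
  sSup {r | ∃ (x₀ : ℝ) (x : Fin n → ℝ),
    (-(adjA G) - x₀ • Jmat n - Matrix.diagonal x).PosSemidef ∧
    r = (edgeCount G : ℝ) / 2 + (∑ i, x i) / 4}

lemma nonneg_of_forall_lt_mul_add {w a b : ℝ} (h : ∀ t > 0, w < t * a + b) : 0 ≤ a := by
  by_contra! ha
  have := h ((|b - w| + 1) / -a) (div_pos (by positivity) (neg_pos.2 ha))
  rw [div_mul_eq_mul_div, div_neg, mul_div_assoc, div_self ha.ne] at this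
  linarith [le_abs_self (b - w)]

lemma nonpos_of_forall_lt_mul {w a : ℝ} (h : ∀ t > 0, w < t * a) : w ≤ 0 := by
  by_contra! hw
  have h1 := h (w / (|a| + 1)) (by positivity)
  have h2 : w / (|a| + 1) * a ≤ w / (|a| + 1) * |a| :=
    mul_le_mul_of_nonneg_left (le_abs_self a) (by positivity)
  have h3 : w / (|a| + 1) * |a| < w := by
    rw [div_mul_eq_mul_div, div_lt_iff₀ (by positivity)]
    nlinarith [abs_nonneg a]
  linarith

lemma eq_zero_of_forall_add_mul_le {w a b : ℝ} (h : ∀ t, a + t * b ≤ w) : b = 0 := by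
  by_contra hb
  have := h ((w - a + 1) / b)
  rw [div_mul_cancel₀ _ hb] at this
  linarith

lemma sum_sum_eq_two_mul_sum_sum_lt {ι : Type*} [Fintype ι] [LinearOrder ι] (f : ι → ι → ℝ)
    (hsymm : ∀ i j, f i j = f j i) (hdiag : ∀ i, f i i = 0) :
    ∑ i, ∑ j, f i j = 2 * ∑ i, ∑ j, if i < j then f i j else 0 := by
  have hsplit : ∀ i j, f i j = (if i < j then f i j else 0) + (if j < i then f j i else 0) := by
    intro i j
    rcases lt_trichotomy i j with h | rfl | h
    · simp [h, h.not_gt]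
    · simp [hdiag]
    · simp [h, h.not_gt, hsymm i j]
  calc ∑ i, ∑ j, f i j
      = ∑ i, ∑ j, ((if i < j then f i j else 0) + (if j < i then f j i else 0)) :=
        Finset.sum_congr rfl fun i _ => Finset.sum_congr rfl fun j _ => hsplit i j
    _ = 2 * ∑ i, ∑ j, if i < j then f i j else 0 := by
        simp only [Finset.sum_add_distrib]
        rw [Finset.sum_comm (f := fun i j => if j < i then f j i else 0)]
        ring

section QuadraticForm
variable {ι : Type*} [Fintype ι]

lemma abs_dotProduct_mulVec_le (M : Matrix ι ι ℝ) (v : ι → ℝ) :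
    |v ⬝ᵥ M *ᵥ v| ≤ (∑ i, ∑ j, |M i j|) * ∑ i, v i ^ 2 := by
  have hv : ∀ i j, |v i| * |v j| ≤ ∑ k, v k ^ 2 := fun i j => by
    have hi := Finset.single_le_sum (fun k _ => sq_nonneg (v k)) (mem_univ i)
    have hj := Finset.single_le_sum (fun k _ => sq_nonneg (v k)) (mem_univ j)
    nlinarith [sq_nonneg (|v i| - |v j|), sq_abs (v i), sq_abs (v j)]
  calc |v ⬝ᵥ M *ᵥ v| = |∑ i, ∑ j, M i j * (v i * v j)| := by
        simp only [dotProduct, mulVec, Finset.mul_sum]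
        congr 1; refine Finset.sum_congr rfl fun i _ => Finset.sum_congr rfl fun j _ => by ring
    _ ≤ ∑ i, ∑ j, |M i j| * (|v i| * |v j|) := by
        refine (abs_sum_le_sum_abs _ _).trans (Finset.sum_le_sum fun i _ => ?_)
        refine (abs_sum_le_sum_abs _ _).trans_eq (Finset.sum_congr rfl fun j _ => ?_)
        rw [abs_mul, abs_mul]
    _ ≤ ∑ i, ∑ j, |M i j| * ∑ k, v k ^ 2 := by gcongr with i _ j _; exact hv i j
    _ = (∑ i, ∑ j, |M i j|) * ∑ i, v i ^ 2 := by simp only [Finset.sum_mul]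

end QuadraticForm

section EntrySum
variable {n : ℕ}

lemma msum_add (M N : Matrix (Fin n) (Fin n) ℝ) : msum (M + N) = msum M + msum N := by
  simp [msum, Finset.sum_add_distrib]

lemma msum_sum {m : ℕ} (M : Fin m → Matrix (Fin n) (Fin n) ℝ) :
    msum (∑ k, M k) = ∑ k, msum (M k) := by
  simp only [msum, Matrix.sum_apply]
  exact (Finset.sum_congr rfl fun _ _ => Finset.sum_comm).trans Finset.sum_comm

lemma msum_diagonal (d : Fin n → ℝ) : msum (diagonal d) = ∑ i, d i := by
  simp [msum, diagonal_apply]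

lemma msum_hadamard_vecMulVec (M : Matrix (Fin n) (Fin n) ℝ) (v : Fin n → ℝ) :
    msum (M ⊙ vecMulVec v v) = v ⬝ᵥ M *ᵥ v := by
  simp only [msum, hadamard_apply, vecMulVec_apply, dotProduct, mulVec, Finset.mul_sum]
  exact Finset.sum_congr rfl fun i _ => Finset.sum_congr rfl fun j _ => by ring

lemma msum_vecMulVec (v : Fin n → ℝ) : msum (vecMulVec v v) = (∑ i, v i) ^ 2 := by
  simp [msum, vecMulVec_apply, sq, Finset.sum_mul_sum]

lemma msum_smul (t : ℝ) (M : Matrix (Fin n) (Fin n) ℝ) : msum (t • M) = t * msum M := by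
  simp [msum, Finset.mul_sum]

lemma exists_isSymm_apply_eq_msum_hadamard (f : Matrix (Fin n) (Fin n) ℝ →ₗ[ℝ] ℝ) :
    ∃ Y : Matrix (Fin n) (Fin n) ℝ, Y.IsSymm ∧ ∀ Z, Z.IsSymm → f Z = msum (Y ⊙ Z) := by
  set C : Fin n → Fin n → ℝ := fun i j => f (single i j 1)
  have hf : ∀ Z, f Z = ∑ i, ∑ j, C i j * Z i j := fun Z => by
    conv_lhs => rw [matrix_eq_sum_single Z]
    simp only [map_sum]
    refine Finset.sum_congr rfl fun i _ => Finset.sum_congr rfl fun j _ => ?_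
    rw [show single i j (Z i j) = Z i j • single i j 1 by simp [smul_single], map_smul,
      smul_eq_mul, mul_comm]
  refine ⟨of fun i j => (C i j + C j i) / 2, IsSymm.ext fun i j => by simp [add_comm],
    fun Z hZ => ?_⟩
  have hswap : ∑ i, ∑ j, C j i * Z i j = ∑ i, ∑ j, C i j * Z i j := by
    rw [Finset.sum_comm]
    exact Finset.sum_congr rfl fun i _ => Finset.sum_congr rfl fun j _ => by rw [hZ.apply]
  calc f Z = (∑ i, ∑ j, C i j * Z i j + ∑ i, ∑ j, C j i * Z i j) / 2 := by rw [hswap, hf]; ring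
    _ = msum (of (fun i j => (C i j + C j i) / 2) ⊙ Z) := by
      simp only [msum, hadamard_apply, of_apply, Finset.sum_div, ← Finset.sum_add_distrib]
      exact Finset.sum_congr rfl fun i _ => Finset.sum_congr rfl fun j _ => by ring

end EntrySum

section CoerciveCone
variable {ι : Type*} [Fintype ι]

variable (ι) in
def coerciveCone : Set (Matrix ι ι ℝ) :=
  {Z | ∃ ε > 0, ∀ v, ε * ∑ i, v i ^ 2 ≤ v ⬝ᵥ Z *ᵥ v}

lemma convex_coerciveCone : Convex ℝ (coerciveCone ι) := by
  rintro X ⟨ε, hε, hX⟩ W ⟨δ, hδ, hW⟩ a b ha hb hab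
  refine ⟨min ε δ, lt_min hε hδ, fun v => ?_⟩
  rw [add_mulVec, Matrix.smul_mulVec, Matrix.smul_mulVec, dotProduct_add, dotProduct_smul,
    dotProduct_smul, smul_eq_mul, smul_eq_mul]
  set S := ∑ i, v i ^ 2
  have hS : 0 ≤ S := Finset.sum_nonneg fun i _ => sq_nonneg (v i)
  have hX' := mul_le_mul_of_nonneg_left ((mul_le_mul_of_nonneg_right (min_le_left ε δ) hS).trans
    (hX v)) ha
  have hW' := mul_le_mul_of_nonneg_left ((mul_le_mul_of_nonneg_right (min_le_right ε δ) hS).trans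
    (hW v)) hb
  have hsplit : min ε δ * S = a * (min ε δ * S) + b * (min ε δ * S) := by
    rw [← add_mul, hab, one_mul]
  linarith

lemma isOpen_coerciveCone : IsOpen (coerciveCone ι) := by
  refine isOpen_iff_forall_mem_open.2 fun Z ⟨ε, hε, hZ⟩ => ⟨{W | ∑ i, ∑ j, |W i j - Z i j| < ε / 2},
    fun W hW => ⟨ε / 2, by positivity, fun v => ?_⟩, ?_, by simpa using hε⟩
  · have h := neg_le_of_abs_le (abs_dotProduct_mulVec_le (W - Z) v)
    rw [sub_mulVec, dotProduct_sub] at h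
    have hv : 0 ≤ ∑ i, v i ^ 2 := Finset.sum_nonneg fun i _ => sq_nonneg (v i)
    simp only [Matrix.sub_apply] at h
    linarith [hZ v, mul_le_mul_of_nonneg_right (le_of_lt hW) hv]
  · exact isOpen_lt (continuous_finsetSum _ fun i _ => continuous_finsetSum _ fun j _ =>
      ((continuous_id.matrix_elem i j).sub continuous_const).abs) continuous_const

lemma smul_one_add_mem_coerciveCone [DecidableEq ι] {ε : ℝ} (hε : 0 < ε) {P : Matrix ι ι ℝ}
    (hP : ∀ v, 0 ≤ v ⬝ᵥ P *ᵥ v) : ε • 1 + P ∈ coerciveCone ι := by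
  refine ⟨ε, hε, fun v => ?_⟩
  rw [add_mulVec, Matrix.smul_mulVec, one_mulVec, dotProduct_add, dotProduct_smul, smul_eq_mul]
  have hvv : v ⬝ᵥ v = ∑ i, v i ^ 2 := by simp [dotProduct, sq]
  rw [hvv]
  linarith [hP v]

lemma posSemidef_of_mem_coerciveCone {Z : Matrix ι ι ℝ} (hZ : Z.IsSymm) (h : Z ∈ coerciveCone ι) :
    Z.PosSemidef := by
  obtain ⟨ε, hε, hZv⟩ := h
  refine PosSemidef.of_dotProduct_mulVec_nonneg (isHermitian_iff_isSymm.2 hZ) fun v => ?_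
  rw [star_trivial]
  exact (mul_nonneg hε.le (Finset.sum_nonneg fun i _ => sq_nonneg (v i))).trans (hZv v)

end CoerciveCone

section RestrictedEigenvalue
variable {n : ℕ}

lemma sum_sq_pos {x : Fin n → ℝ} (hx : x ≠ 0) : 0 < ∑ i, x i ^ 2 := by
  obtain ⟨i, hi⟩ := Function.ne_iff.1 hx
  exact Finset.sum_pos' (fun j _ => sq_nonneg (x j)) ⟨i, mem_univ i, pow_two_pos_of_ne_zero hi⟩

lemma bddAbove_rayleigh (B : Matrix (Fin n) (Fin n) ℝ) :
    BddAbove {r | ∃ x : Fin n → ℝ, x ≠ 0 ∧ ∑ i, x i = 0 ∧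
      r = (x ⬝ᵥ B.mulVec x) / (∑ i, (x i) ^ 2)} := by
  refine ⟨∑ i, ∑ j, |B i j|, ?_⟩
  rintro _ ⟨x, hx, -, rfl⟩
  rw [div_le_iff₀ (sum_sq_pos hx)]
  exact (le_abs_self _).trans (abs_dotProduct_mulVec_le B x)

lemma dotProduct_mulVec_le_lamS_mul (B : Matrix (Fin n) (Fin n) ℝ) {x : Fin n → ℝ}
    (hx : ∑ i, x i = 0) : x ⬝ᵥ B *ᵥ x ≤ lamS B * ∑ i, x i ^ 2 := by
  rcases eq_or_ne x 0 with rfl | hx0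
  · simp
  · rw [← div_le_iff₀ (sum_sq_pos hx0)]
    exact le_csSup (bddAbove_rayleigh B) ⟨x, hx0, hx, rfl⟩

lemma lamS_le (hn : 2 ≤ n) {B : Matrix (Fin n) (Fin n) ℝ} {c : ℝ}
    (h : ∀ x : Fin n → ℝ, ∑ i, x i = 0 → x ⬝ᵥ B *ᵥ x ≤ c * ∑ i, x i ^ 2) : lamS B ≤ c := by
  let i : Fin n := ⟨0, by omega⟩
  let j : Fin n := ⟨1, by omega⟩
  have hij : i ≠ j := by simp [i, j, Fin.ext_iff]
  have hx : Pi.single i 1 - Pi.single j 1 ≠ (0 : Fin n → ℝ) := fun h => by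
    simpa [hij] using congrFun h i
  refine csSup_le ⟨_, _, hx, by simp [Finset.sum_sub_distrib], rfl⟩ ?_
  rintro _ ⟨x, hx0, hx, rfl⟩
  rw [div_le_iff₀ (sum_sq_pos hx0)]
  exact h x hx

theorem msum_hadamard_le_lamS_mul_trace (B : Matrix (Fin n) (Fin n) ℝ)
    {Y : Matrix (Fin n) (Fin n) ℝ} (hY : Y.PosSemidef) (hY0 : msum Y = 0) :
    msum (B ⊙ Y) ≤ lamS B * Y.trace := by
  obtain ⟨m, v, rfl⟩ := posSemidef_iff_eq_sum_vecMulVec.1 hY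
  simp only [star_trivial, msum_sum, msum_vecMulVec] at hY0 ⊢
  have hv : ∀ k, ∑ i, v k i = 0 := fun k => pow_eq_zero_iff two_ne_zero |>.1 <|
    (Finset.sum_eq_zero_iff_of_nonneg fun k _ => sq_nonneg _).1 hY0 k (mem_univ k)
  have hsum : B ⊙ ∑ k, vecMulVec (v k) (v k) = ∑ k, B ⊙ vecMulVec (v k) (v k) := by
    ext; simp [Matrix.sum_apply, Finset.mul_sum]
  rw [hsum, msum_sum, trace_sum, Finset.mul_sum]
  refine Finset.sum_le_sum fun k _ => ?_
  rw [msum_hadamard_vecMulVec, trace_vecMulVec]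
  simpa [dotProduct, sq] using dotProduct_mulVec_le_lamS_mul B (hv k)

end RestrictedEigenvalue

section Graph
variable {n : ℕ} (G : SimpleGraph (Fin n)) [DecidableRel G.Adj]

lemma isSymm_adjA : (adjA G).IsSymm := G.isSymm_adjMatrix

lemma msum_adjA : msum (adjA G) = 2 * edgeCount G := by
  have h := G.natCast_card_dart_eq_dotProduct (α := ℝ)
  rw [G.dart_card_eq_twice_card_edges] at h
  simpa [msum, edgeCount, adjA, dotProduct, mulVec] using h.symm

lemma primal_objective_eq {Y : Matrix (Fin n) (Fin n) ℝ} (hY : Y.IsSymm) :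
    (∑ i, ∑ j, if i < j then adjA G i j * (1 - Y i j) / 2 else 0)
      = (2 * edgeCount G - msum (adjA G ⊙ Y)) / 4 := by
  have h := sum_sum_eq_two_mul_sum_sum_lt (fun i j => adjA G i j * (1 - Y i j) / 2)
    (fun i j => by rw [(isSymm_adjA G).apply, hY.apply]) (fun i => by simp [adjA])
  have hsum : ∑ i, ∑ j, adjA G i j * (1 - Y i j) / 2
      = (msum (adjA G) - msum (adjA G ⊙ Y)) / 2 := by
    simp only [msum, hadamard_apply, ← Finset.sum_sub_distrib, Finset.sum_div]
    exact Finset.sum_congr rfl fun _ _ => Finset.sum_congr rfl fun _ _ => by ring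
  rw [msum_adjA] at hsum
  linarith

end Graph

section DualMatrix
variable {n : ℕ}

lemma Jmat_mulVec (v : Fin n → ℝ) : Jmat n *ᵥ v = fun _ => ∑ i, v i := by
  ext; simp [Jmat, mulVec, dotProduct]

lemma dotProduct_diagonal_mulVec (x v : Fin n → ℝ) :
    v ⬝ᵥ diagonal x *ᵥ v = ∑ i, x i * v i ^ 2 := by
  simp only [dotProduct, mulVec_diagonal]
  exact Finset.sum_congr rfl fun _ _ => by ring

lemma isSymm_dualMatrix {A : Matrix (Fin n) (Fin n) ℝ} (hA : A.IsSymm) (x₀ : ℝ) (x : Fin n → ℝ) :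
    (-A - x₀ • Jmat n - diagonal x).IsSymm :=
  (hA.neg.sub ((IsSymm.ext fun _ _ => rfl).smul x₀)).sub (isSymm_diagonal x)

lemma dotProduct_dualMatrix_mulVec (A : Matrix (Fin n) (Fin n) ℝ) (x₀ : ℝ) (x v : Fin n → ℝ) :
    v ⬝ᵥ (-A - x₀ • Jmat n - diagonal x) *ᵥ v
      = -(v ⬝ᵥ A *ᵥ v) - x₀ * (∑ i, v i) ^ 2 - ∑ i, x i * v i ^ 2 := by
  rw [sub_mulVec, sub_mulVec, neg_mulVec, Matrix.smul_mulVec, Jmat_mulVec, dotProduct_sub,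
    dotProduct_sub, dotProduct_neg, dotProduct_smul, dotProduct_diagonal_mulVec]
  simp [dotProduct, sq, ← Finset.sum_mul]

end DualMatrix

section WeakDuality
variable {n : ℕ} (G : SimpleGraph (Fin n)) [DecidableRel G.Adj]

lemma msum_adjA_add_diagonal (d : Fin n → ℝ) :
    msum (adjA G + diagonal d) = 2 * edgeCount G + ∑ i, d i := by
  rw [msum_add, msum_adjA, msum_diagonal]

theorem gB_le_primal_objective (d : Fin n → ℝ) {Y : Matrix (Fin n) (Fin n) ℝ}
    (hY : Y.PosSemidef) (hdiag : ∀ i, Y i i = 1) (hsum : msum Y = 0) :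
    gB G d ≤ (2 * edgeCount G - msum (adjA G ⊙ Y)) / 4 := by
  have h := msum_hadamard_le_lamS_mul_trace (adjA G + diagonal d) hY hsum
  have htrace : Y.trace = n := by simp [trace, hdiag]
  have hdiagY : diagonal d ⊙ Y = diagonal d := by simp [diagonal_hadamard, hdiag]
  rw [add_hadamard, msum_add, hdiagY, msum_diagonal, htrace] at h
  unfold gB
  rw [msum_adjA_add_diagonal]
  linarith

theorem dual_objective_le_gB (hn : 2 ≤ n) {x₀ : ℝ} {x : Fin n → ℝ}
    (h : (-(adjA G) - x₀ • Jmat n - diagonal x).PosSemidef) :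
    (edgeCount G : ℝ) / 2 + (∑ i, x i) / 4 ≤ gB G x := by
  have hlam : lamS (adjA G + diagonal x) ≤ 0 := lamS_le hn fun v hv => by
    have := h.dotProduct_mulVec_nonneg v
    rw [star_trivial, dotProduct_dualMatrix_mulVec, hv] at this
    rw [add_mulVec, dotProduct_add, dotProduct_diagonal_mulVec]
    linarith
  unfold gB
  rw [msum_adjA_add_diagonal]
  nlinarith [show (0 : ℝ) ≤ n from n.cast_nonneg]

end WeakDuality

section FeasiblePoints
variable {n : ℕ}

lemma dotProduct_Pmat_mulVec (v : Fin n → ℝ) :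
    v ⬝ᵥ Pmat n *ᵥ v = ∑ i, v i ^ 2 - (∑ i, v i) ^ 2 / n := by
  rw [Pmat, sub_mulVec, one_mulVec, Matrix.smul_mulVec, Jmat_mulVec, dotProduct_sub,
    dotProduct_smul]
  simp [dotProduct, sq, Finset.sum_mul, div_eq_inv_mul]

lemma posSemidef_Pmat : (Pmat n).PosSemidef := by
  refine PosSemidef.of_dotProduct_mulVec_nonneg ?_ fun v => ?_
  · exact isHermitian_iff_isSymm.2 (isSymm_one.sub ((IsSymm.ext fun _ _ => rfl).smul _))
  · rw [star_trivial, dotProduct_Pmat_mulVec, sub_nonneg]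
    rcases n.eq_zero_or_pos with rfl | hn
    · simp
    · rw [div_le_iff₀ (by exact_mod_cast hn), mul_comm]
      simpa using sq_sum_le_card_mul_sum_sq (s := univ) (f := v)

lemma exists_primal_feasible (hn : 2 ≤ n) :
    ∃ Y : Matrix (Fin n) (Fin n) ℝ, Y.PosSemidef ∧ (∀ i, Y i i = 1) ∧ msum Y = 0 := by
  have hn1 : (1 : ℝ) < n := by exact_mod_cast hn
  have hn0 : (n : ℝ) ≠ 0 := by positivity
  refine ⟨((n : ℝ) / (n - 1)) • Pmat n, posSemidef_Pmat.smul (by positivity), fun i => ?_, ?_⟩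
  · have : (n : ℝ) - 1 ≠ 0 := by linarith
    simp [Pmat, Jmat]
    field_simp
  · simp [msum, Pmat, Jmat, one_apply, ← Finset.mul_sum, hn0]

lemma exists_dual_feasible (G : SimpleGraph (Fin n)) [DecidableRel G.Adj] :
    ∃ (x₀ : ℝ) (x : Fin n → ℝ), (-(adjA G) - x₀ • Jmat n - diagonal x).PosSemidef := by
  refine ⟨0, fun _ => -∑ i, ∑ j, |adjA G i j|, PosSemidef.of_dotProduct_mulVec_nonneg
    (isHermitian_iff_isSymm.2 (isSymm_dualMatrix (isSymm_adjA G) _ _)) fun v => ?_⟩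
  rw [star_trivial, dotProduct_dualMatrix_mulVec, ← Finset.mul_sum]
  linarith [(le_abs_self _).trans (abs_dotProduct_mulVec_le (adjA G) v)]

end FeasiblePoints

section Alternative
variable {n : ℕ}

lemma msum_hadamard_dualMatrix (Y A : Matrix (Fin n) (Fin n) ℝ) (x₀ : ℝ) (x : Fin n → ℝ) :
    msum (Y ⊙ (-A - x₀ • Jmat n - diagonal x))
      = -msum (Y ⊙ A) - x₀ * msum Y - ∑ i, Y i i * x i := by
  simp only [msum, hadamard_apply, Matrix.sub_apply, Matrix.neg_apply, Matrix.smul_apply, Jmat,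
    of_apply, smul_eq_mul, mul_one, diagonal_apply, mul_sub, mul_neg, mul_ite, mul_zero,
    Finset.sum_sub_distrib, Finset.sum_neg_distrib, Finset.sum_ite_eq, Finset.mem_univ, if_true,
    Finset.mul_sum]
  simp only [mul_comm]

lemma posSemidef_and_nonpos_of_forall_lt_msum_hadamard {Y : Matrix (Fin n) (Fin n) ℝ}
    (hY : Y.IsSymm) {w : ℝ}
    (h : ∀ Z ∈ coerciveCone (Fin n), Z.IsSymm → w < msum (Y ⊙ Z)) : Y.PosSemidef ∧ w ≤ 0 := by
  refine ⟨PosSemidef.of_dotProduct_mulVec_nonneg (isHermitian_iff_isSymm.2 hY) fun v => ?_,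
    nonpos_of_forall_lt_mul (a := msum (Y ⊙ 1)) fun t ht => ?_⟩
  · rw [star_trivial, ← msum_hadamard_vecMulVec]
    refine nonneg_of_forall_lt_mul_add (w := w) (b := msum (Y ⊙ 1)) fun t ht => ?_
    have hvv : (vecMulVec v v).IsSymm := IsSymm.ext fun i j => mul_comm _ _
    have hP : ∀ u, 0 ≤ u ⬝ᵥ (t • vecMulVec v v) *ᵥ u := fun u => by
      rw [Matrix.smul_mulVec, dotProduct_smul, smul_eq_mul]
      exact mul_nonneg ht.le
        (by simpa using (posSemidef_vecMulVec_self_star v).dotProduct_mulVec_nonneg u)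
    have := h _ (smul_one_add_mem_coerciveCone one_pos hP) ((isSymm_one.smul 1).add (hvv.smul t))
    rwa [hadamard_add, msum_add, hadamard_smul, hadamard_smul, msum_smul, msum_smul, one_mul,
      add_comm] at this
  · have := h (t • 1 + 0) (smul_one_add_mem_coerciveCone ht fun v => by simp)
      (by simp)
    rwa [add_zero, hadamard_smul, msum_smul] at this

lemma msum_eq_zero_and_diag_eq_of_forall_le [NeZero n] {A Y : Matrix (Fin n) (Fin n) ℝ} {c w : ℝ}
    (h : ∀ (x₀ : ℝ) (x : Fin n → ℝ), ∑ i, x i = c →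
      msum (Y ⊙ (-A - x₀ • Jmat n - diagonal x)) ≤ w) :
    msum Y = 0 ∧ (∀ i, Y i i = Y 0 0) ∧ -msum (Y ⊙ A) - c * Y 0 0 ≤ w := by
  simp only [msum_hadamard_dualMatrix] at h
  have hc : ∑ i, (Pi.single 0 c : Fin n → ℝ) i = c := by simp
  have hYc : ∑ i, Y i i * (Pi.single 0 c : Fin n → ℝ) i = c * Y 0 0 := by
    simp [Pi.single_apply, mul_comm]
  refine ⟨neg_eq_zero.1 <| eq_zero_of_forall_add_mul_le (w := w)
    (a := -msum (Y ⊙ A) - c * Y 0 0) fun t => ?_, fun i => ?_, ?_⟩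
  · have := h t _ hc
    rw [hYc] at this
    linarith
  · have hx : ∀ t : ℝ, ∑ k, (Pi.single 0 c + t • (Pi.single i 1 - Pi.single 0 1) : Fin n → ℝ) k
        = c := fun t => by simp [Finset.sum_add_distrib, Finset.sum_sub_distrib, ← Finset.mul_sum]
    have hYx : ∀ t : ℝ, ∑ k, Y k k * (Pi.single 0 c + t • (Pi.single i 1 - Pi.single 0 1) :
        Fin n → ℝ) k = c * Y 0 0 + t * (Y i i - Y 0 0) := fun t => by
      simp [Pi.single_apply, mul_add, mul_sub, Finset.sum_add_distrib, Finset.sum_sub_distrib]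
      ring
    have := eq_zero_of_forall_add_mul_le (w := w) (a := -msum (Y ⊙ A) - c * Y 0 0)
      (b := -(Y i i - Y 0 0)) fun t => by
        have := h 0 _ (hx t)
        rw [hYx] at this
        linarith
    linarith
  · have := h 0 _ hc
    rw [hYc] at this
    linarith

end Alternative

theorem exists_primal_feasible_of_forall_not_posSemidef {n : ℕ} [NeZero n]
    {A : Matrix (Fin n) (Fin n) ℝ} (hA : A.IsSymm) {c : ℝ}
    (h : ∀ (x₀ : ℝ) (x : Fin n → ℝ), ∑ i, x i = c →
      ¬(-A - x₀ • Jmat n - diagonal x).PosSemidef) :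
    ∃ Y : Matrix (Fin n) (Fin n) ℝ,
      Y.PosSemidef ∧ (∀ i, Y i i = 1) ∧ msum Y = 0 ∧ -c ≤ msum (A ⊙ Y) := by
  let T : Set (Matrix (Fin n) (Fin n) ℝ) :=
    {Z | ∃ (x₀ : ℝ) (x : Fin n → ℝ), ∑ i, x i = c ∧ Z = -A - x₀ • Jmat n - diagonal x}
  have hT : Convex ℝ T := by
    rintro _ ⟨x₀, x, hx, rfl⟩ _ ⟨y₀, y, hy, rfl⟩ a b - - hab
    refine ⟨a * x₀ + b * y₀, a • x + b • y, ?_, ?_⟩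
    · simp [Finset.sum_add_distrib, ← Finset.mul_sum, hx, hy, ← add_mul, hab]
    · obtain rfl : b = 1 - a := by linarith
      ext i j
      by_cases hij : i = j <;> simp [Jmat, hij] <;> ring
  have hdisj : Disjoint (coerciveCone (Fin n)) T := Set.disjoint_left.2
    fun Z hZ ⟨x₀, x, hx, hZT⟩ => h x₀ x hx <|
      hZT ▸ posSemidef_of_mem_coerciveCone (hZT ▸ isSymm_dualMatrix hA x₀ x) hZ
  obtain ⟨f, u, hfs, hfT⟩ :=
    geometric_hahn_banach_open convex_coerciveCone isOpen_coerciveCone hT hdisj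
  obtain ⟨Y, hYs, hY⟩ := exists_isSymm_apply_eq_msum_hadamard (-f).toLinearMap
  obtain ⟨hYpsd, hu⟩ := posSemidef_and_nonpos_of_forall_lt_msum_hadamard hYs (w := -u)
    fun Z hZ hZs => by
      rw [← hY Z hZs, ContinuousLinearMap.coe_coe]
      show -u < -f Z
      linarith [hfs Z hZ]
  obtain ⟨hsum, hdiag, hval⟩ := msum_eq_zero_and_diag_eq_of_forall_le (A := A) (c := c) (w := -u)
    fun x₀ x hx => by
      rw [← hY _ (isSymm_dualMatrix hA x₀ x), ContinuousLinearMap.coe_coe]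
      show -f _ ≤ -u
      linarith [hfT _ ⟨x₀, x, hx, rfl⟩]
  have hy : 0 < Y 0 0 := by
    refine hYpsd.diag_nonneg.lt_of_ne fun hy0 => ?_
    have hY0 : Y = 0 := hYpsd.trace_eq_zero_iff.1 (by simp [trace, hdiag, ← hy0])
    have h1 := hfs 1 (by simpa using smul_one_add_mem_coerciveCone one_pos (P := 0) (by simp))
    have h2 := hY 1 isSymm_one
    simp [hY0, msum] at h2 hval
    linarith
  refine ⟨(Y 0 0)⁻¹ • Y, hYpsd.smul (inv_nonneg.2 hy.le), fun i => by simp [hdiag i, hy.ne'],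
    by rw [msum_smul, hsum, mul_zero], ?_⟩
  rw [hadamard_smul, msum_smul, hadamard_comm, le_inv_mul_iff₀ hy]
  linarith

section Bounds
variable {n : ℕ} (G : SimpleGraph (Fin n)) [DecidableRel G.Adj]

lemma bddAbove_gB (hn : 2 ≤ n) : BddAbove {r | ∃ d : Fin n → ℝ, r = gB G d} := by
  obtain ⟨Y, hY, hdiag, hsum⟩ := exists_primal_feasible hn
  exact ⟨_, fun _ ⟨d, hd⟩ => hd ▸ gB_le_primal_objective G d hY hdiag hsum⟩

lemma hB_le_hP (hn : 2 ≤ n) : hB G ≤ hP G := by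
  obtain ⟨Y₀, hY₀, hdiag₀, hsum₀⟩ := exists_primal_feasible hn
  refine csSup_le ⟨_, 0, rfl⟩ fun _ ⟨d, hd⟩ => hd ▸ le_csInf ⟨_, Y₀, hY₀, hdiag₀, hsum₀, rfl⟩ ?_
  rintro _ ⟨Y, hY, hdiag, hsum, rfl⟩
  rw [primal_objective_eq G (isHermitian_iff_isSymm.1 hY.isHermitian)]
  exact gB_le_primal_objective G d hY hdiag hsum

lemma hD_le_hB (hn : 2 ≤ n) : hD G ≤ hB G := by
  obtain ⟨x₀, x, hx⟩ := exists_dual_feasible G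
  refine csSup_le ⟨_, x₀, x, hx, rfl⟩ ?_
  rintro _ ⟨y₀, y, hy, rfl⟩
  exact (dual_objective_le_gB G hn hy).trans (le_csSup (bddAbove_gB G hn) ⟨y, rfl⟩)

lemma hP_le_primal_objective {Y : Matrix (Fin n) (Fin n) ℝ} (hY : Y.PosSemidef)
    (hdiag : ∀ i, Y i i = 1) (hsum : msum Y = 0) :
    hP G ≤ (2 * edgeCount G - msum (adjA G ⊙ Y)) / 4 := by
  rw [← primal_objective_eq G (isHermitian_iff_isSymm.1 hY.isHermitian)]
  refine csInf_le ⟨gB G 0, ?_⟩ ⟨Y, hY, hdiag, hsum, rfl⟩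
  rintro _ ⟨Y, hY, hdiag, hsum, rfl⟩
  rw [primal_objective_eq G (isHermitian_iff_isSymm.1 hY.isHermitian)]
  exact gB_le_primal_objective G 0 hY hdiag hsum

lemma dual_objective_le_hD (hn : 2 ≤ n) {x₀ : ℝ} {x : Fin n → ℝ}
    (h : (-(adjA G) - x₀ • Jmat n - diagonal x).PosSemidef) :
    (edgeCount G : ℝ) / 2 + (∑ i, x i) / 4 ≤ hD G := by
  obtain ⟨b, hb⟩ := bddAbove_gB G hn
  refine le_csSup ⟨b, ?_⟩ ⟨x₀, x, h, rfl⟩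
  rintro _ ⟨y₀, y, hy, rfl⟩
  exact (dual_objective_le_gB G hn hy).trans (hb ⟨y, rfl⟩)

lemma hP_le_hD (hn : 2 ≤ n) : hP G ≤ hD G := by
  have : NeZero n := ⟨by omega⟩
  refine le_of_forall_gt_imp_ge_of_dense fun γ hγ => ?_
  obtain ⟨Y, hY, hdiag, hsum, hval⟩ := exists_primal_feasible_of_forall_not_posSemidef
    (isSymm_adjA G) (c := 4 * γ - 2 * edgeCount G) fun x₀ x hx hpsd =>
      hγ.not_ge (by linarith [hx ▸ dual_objective_le_hD G hn hpsd])
  linarith [hP_le_primal_objective G hY hdiag hsum]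

end Bounds

theorem boppana_eq_feige_kilian_general {n : ℕ} (hn2 : 2 ≤ n)
    (G : SimpleGraph (Fin n)) [DecidableRel G.Adj] :
    hB G = hP G ∧ hP G = hD G :=
  ⟨(hB_le_hP G hn2).antisymm ((hP_le_hD G hn2).trans (hD_le_hB G hn2)),
    (hP_le_hD G hn2).antisymm ((hD_le_hB G hn2).trans (hB_le_hP G hn2))⟩

/-- Boppana's lower bound coincides with both Feige–Kilian SDP
bounds: `h(G) = h_p(G) = h_d(G)`. -/
theorem boppana_eq_feige_kilian {n : ℕ} (hn2 : 2 ≤ n) (hne : Even n)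
    (G : SimpleGraph (Fin n)) [DecidableRel G.Adj] :
    hB G = hP G ∧ hP G = hD G :=
  boppana_eq_feige_kilian_general hn2 G
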